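/- The Newton primitives P_n of NSymm, defined recursively by P_n = nZ_n - (Z_{n-1}P_1 + Z_{n-2}P_2 + ... + Z_1 P_{n-1}), are primitive elements of the bialgebra NSymm: μ(P_n) = P_n ⊗ 1 + 1 ⊗ P_n. -/

import Mathlib

open TensorProduct

/-- `NSymm` is the free associative algebra `ℤ⟨Z_1, Z_2, ...⟩`. -/
noncomputable abbrev NSymm : Type := FreeAlgebra ℤ ℕ

/-- `Z 0 = 1` and `Z (n+1)` is the generator `Z_{n+1}` of `NSymm`. -/
noncomputable def Z : ℕ → NSymm
  | 0 => 1
  | n + 1 => FreeAlgebra.ι ℤ n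

/-- The comultiplication of `NSymm`: the algebra homomorphism with
`μ(Z_n) = Σ_{i+j=n} Z_i ⊗ Z_j`. -/
noncomputable def mu : NSymm →ₐ[ℤ] @TensorProduct ℤ _ NSymm NSymm _ _ Algebra.toModule Algebra.toModule :=
  FreeAlgebra.lift ℤ fun n => ∑ i ∈ Finset.range (n + 2), Z i ⊗ₜ[ℤ] Z (n + 1 - i)

/-- The Newton primitives, defined by the recursion
`P n = n Z_n - (Z_{n-1} P_1 + Z_{n-2} P_2 + ⋯ + Z_1 P_{n-1})` (and `P 0 = 0`). -/
noncomputable def P : ℕ → NSymm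
  | 0 => 0
  | n + 1 =>
    (n + 1) • Z (n + 1) - ∑ i ∈ (Finset.range n).attach, Z (n - i.1) * P (i.1 + 1)
  decreasing_by exact Nat.succ_lt_succ (Finset.mem_range.mp i.2)

/-! The Euler identity `n = a + b` on the antidiagonal shows that, when
`Δ z_n = Σ_{a+b=n} z_a ⊗ z_b`, the image `Σ_{i+j=n} Δ(z_i) Δ(p_j) = n Δ(z_n)` of the Newton relation
`Σ_{i+j=n} z_i p_j = n z_n` stays true with each `Δ(p_j)` replaced by `p_j ⊗ 1 + 1 ⊗ p_j`.
Subtracting the two identities, the defects `Δ(p_j) - (p_j ⊗ 1 + 1 ⊗ p_j)` with `j < n` vanish by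
induction, and the remaining term is `Δ(z_0)` times the defect of `p_n`, with `z_0 = 1`. -/

open Finset

theorem sum_antidiagonal_sum_antidiagonal_assoc {M : Type*} [AddCommMonoid M]
    (f : ℕ → ℕ → ℕ → M) (n : ℕ) :
    ∑ x ∈ antidiagonal n, ∑ y ∈ antidiagonal x.1, f y.1 y.2 x.2
      = ∑ x ∈ antidiagonal n, ∑ y ∈ antidiagonal x.2, f x.1 y.1 y.2 := by
  simp only [sum_sigma']
  apply sum_nbij' (fun ⟨⟨_, j⟩, ⟨a, b⟩⟩ ↦ ⟨(a, b + j), (b, j)⟩)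
    (fun ⟨⟨a, _⟩, ⟨b, j⟩⟩ ↦ ⟨(a + b, j), (a, b)⟩) <;>
    aesop (add simp add_assoc)

theorem sum_antidiagonal_sum_antidiagonal_fst_comm {M : Type*} [AddCommMonoid M]
    (f : ℕ → ℕ → ℕ → M) (n : ℕ) :
    ∑ x ∈ antidiagonal n, ∑ y ∈ antidiagonal x.1, f y.1 y.2 x.2
      = ∑ x ∈ antidiagonal n, ∑ y ∈ antidiagonal x.1, f y.1 x.2 y.2 := by
  rw [sum_antidiagonal_sum_antidiagonal_assoc,
    sum_antidiagonal_sum_antidiagonal_assoc (fun a b c ↦ f a c b)]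
  exact sum_congr rfl fun x _ ↦
    (Finset.Nat.sum_antidiagonal_swap (f := fun y ↦ f x.1 y.1 y.2)).symm

section Newton

variable {R A : Type*} {z p : ℕ → A}

theorem sum_antidiagonal_tmul_mul_primitive_eq_nsmul [CommSemiring R] [Semiring A] [Algebra R A]
    (hnewton : ∀ m, ∑ x ∈ antidiagonal m, z x.1 * p x.2 = m • z m) (n : ℕ) :
    ∑ x ∈ antidiagonal n,
        (∑ y ∈ antidiagonal x.1, z y.1 ⊗ₜ[R] z y.2) * (p x.2 ⊗ₜ[R] 1 + 1 ⊗ₜ[R] p x.2)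
      = n • ∑ x ∈ antidiagonal n, z x.1 ⊗ₜ[R] z x.2 := by
  have hleft : ∑ x ∈ antidiagonal n, ∑ y ∈ antidiagonal x.1, (z y.1 * p x.2) ⊗ₜ[R] z y.2
      = ∑ x ∈ antidiagonal n, (x.1 • z x.1) ⊗ₜ[R] z x.2 := by
    rw [sum_antidiagonal_sum_antidiagonal_fst_comm (fun a b j ↦ (z a * p j) ⊗ₜ[R] z b)]
    simp only [← TensorProduct.sum_tmul, hnewton]
  have hright : ∑ x ∈ antidiagonal n, ∑ y ∈ antidiagonal x.1, z y.1 ⊗ₜ[R] (z y.2 * p x.2)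
      = ∑ x ∈ antidiagonal n, z x.1 ⊗ₜ[R] (x.2 • z x.2) := by
    rw [sum_antidiagonal_sum_antidiagonal_assoc (fun a b j ↦ z a ⊗ₜ[R] (z b * p j))]
    simp only [← TensorProduct.tmul_sum, hnewton]
  simp only [sum_mul, mul_add, Algebra.TensorProduct.tmul_mul_tmul, mul_one,
    sum_add_distrib, hleft, hright, smul_sum]
  rw [← sum_add_distrib]
  refine sum_congr rfl fun x hx ↦ ?_
  rw [← (HasAntidiagonal.mem_antidiagonal.mp hx)]
  simp only [add_smul, TensorProduct.smul_tmul', TensorProduct.tmul_smul]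

theorem map_eq_tmul_one_add_one_tmul_of_newton [CommRing R] [Ring A] [Algebra R A]
    (comul : A →ₐ[R] A ⊗[R] A)
    (hcomul : ∀ m, comul (z m) = ∑ x ∈ antidiagonal m, z x.1 ⊗ₜ[R] z x.2)
    (hz : z 0 = 1) (hnewton : ∀ m, ∑ x ∈ antidiagonal m, z x.1 * p x.2 = m • z m) (n : ℕ) :
    comul (p n) = p n ⊗ₜ[R] 1 + 1 ⊗ₜ[R] p n := by
  induction n using Nat.strong_induction_on with
  | _ n ih =>
  set defect : ℕ → A ⊗[R] A := fun j ↦ comul (p j) - (p j ⊗ₜ[R] 1 + 1 ⊗ₜ[R] p j)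
  have hmap : ∑ x ∈ antidiagonal n, comul (z x.1) * comul (p x.2) = n • comul (z n) := by
    simp only [← map_mul, ← map_sum, hnewton, map_nsmul]
  have hprim : ∑ x ∈ antidiagonal n, comul (z x.1) * (p x.2 ⊗ₜ[R] 1 + 1 ⊗ₜ[R] p x.2)
      = n • comul (z n) := by
    simp only [hcomul]
    exact sum_antidiagonal_tmul_mul_primitive_eq_nsmul hnewton n
  have hsum : ∑ x ∈ antidiagonal n, comul (z x.1) * defect x.2 = 0 := by
    simp only [defect, mul_sub, sum_sub_distrib, hmap, hprim, sub_self]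
  rw [sum_eq_single_of_mem (0, n) (by simp), hz, map_one, one_mul, sub_eq_zero] at hsum
  · exact hsum
  · intro x hx hne
    have hlt : x.2 < n := by
      rw [HasAntidiagonal.mem_antidiagonal] at hx
      grind
    simp [defect, ih x.2 hlt]

end Newton

theorem P_succ (n : ℕ) :
    P (n + 1) = (n + 1) • Z (n + 1) - ∑ i ∈ range n, Z (n - i) * P (i + 1) := by
  rw [P, sum_attach (range n) (fun i ↦ Z (n - i) * P (i + 1))]

theorem sum_antidiagonal_Z_mul_P (m : ℕ) :
    ∑ x ∈ antidiagonal m, Z x.1 * P x.2 = m • Z m := by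
  cases m with
  | zero => simp [P]
  | succ n =>
    rw [Finset.Nat.sum_antidiagonal_succ', P.eq_1, mul_zero, zero_add,
      ← Finset.Nat.sum_antidiagonal_swap]
    simp only [Prod.fst_swap, Prod.snd_swap]
    rw [Finset.Nat.sum_antidiagonal_eq_sum_range_succ (fun i j ↦ Z j * P (i + 1)),
      sum_range_succ, Nat.sub_self, Z, one_mul, P_succ, add_sub_cancel]

theorem mu_Z (m : ℕ) : mu (Z m) = ∑ x ∈ antidiagonal m, Z x.1 ⊗ₜ[ℤ] Z x.2 := by
  rw [Finset.Nat.sum_antidiagonal_eq_sum_range_succ (fun i j ↦ Z i ⊗ₜ[ℤ] Z j)]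
  cases m with
  | zero => exact (map_one mu).trans Algebra.TensorProduct.one_def
  | succ k => exact FreeAlgebra.lift_ι_apply _ _

theorem stmt_5_general (n : ℕ) :
    mu (P n) = P n ⊗ₜ[ℤ] 1 + 1 ⊗ₜ[ℤ] P n :=
  map_eq_tmul_one_add_one_tmul_of_newton mu mu_Z rfl sum_antidiagonal_Z_mul_P n

/-- Proposition 4.3: the Newton polynomials `P n` are primitive elements of `NSymm`. -/
theorem stmt_5 (n : ℕ) (hn : 1 ≤ n) :
    mu (P n) = P n ⊗ₜ[ℤ] 1 + 1 ⊗ₜ[ℤ] P n :=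
  stmt_5_general n
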